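/- arXiv:2310.12607 — 2 statements merged into one kernel-verified Lean document; each statement's English description precedes it below -/
import Mathlib

section
/- For all nonnegative integers i, j and all integers k₁ ≤ k₂, Σ_{r=j}^{i} c(i,r,k₁)·b(r,j,k₂) = i! · binom(k₂-k₁, i-j), where the binomial coefficient binom(k₂-k₁, i-j) is 0 when i-j < 0 or i-j > k₂-k₁. -/
open Finset

/-- Signed Stirling numbers of the first kind, defined as the coefficients of the
falling factorial polynomial `x*(x-1)*...*(x-i+1) = sum_{r=0}^{i} s(i,r)*x^r`. -/
noncomputable def s (i r : ℕ) : ℝ := (descPochhammer ℝ i).coeff r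

/-- Moment generating Stirling numbers of the first kind (MSN1):
`c(i,j,k) = sum_{r=j}^{i} binom(r,j)*(-k)^(r-j)*s(i,r)` (and `0` if `j > i`). -/
noncomputable def c (i j : ℕ) (k : ℝ) : ℝ :=
  ∑ r ∈ Finset.Icc j i, (r.choose j : ℝ) * (-k) ^ (r - j) * s i r

/-- Moment generating Stirling numbers of the second kind (MSN2):
`b(i,j,k) = sum_{r=0}^{j} binom(j,r)*(-1)^(j-r)*(r+k)^i`. -/
noncomputable def b (i j : ℕ) (k : ℝ) : ℝ :=
  ∑ r ∈ Finset.range (j + 1), (j.choose r : ℝ) * (-1 : ℝ) ^ (j - r) * ((r : ℝ) + k) ^ i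

/-!
Writing `x^{(m)} = x(x - 1)⋯(x - m + 1)`, the numbers `c(i, r, k)` are the coefficients of
`(x - k)^{(i)}` in powers of `x`, while `b(r, j, k)` is the `j`-th forward difference of `x ^ r`
at `k`. Hence the sum is the `j`-th forward difference of `x ↦ (x - k₁)^{(i)}` at `k₂`. Since
`Δ x^{(m)} = m x^{(m - 1)}`, this equals `i^{(j)} (k₂ - k₁)^{(i - j)} = i! * binom(k₂ - k₁, i - j)`
when `k₂ - k₁` is a natural number.
-/

open Polynomial

open scoped fwdDiff

section fwdDiff

variable {R : Type*} [CommRing R]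

theorem Polynomial.fwdDiff_iter_eval_eq_sum {P : R[X]} {N : ℕ} (hN : P.natDegree < N) (n : ℕ)
    (y : R) :
    (Δ_[1])^[n] P.eval y = ∑ r ∈ range N, P.coeff r * (Δ_[1])^[n] (fun x : R ↦ x ^ r) y := by
  have hP : P.eval = ∑ r ∈ range N, P.coeff r • fun x : R ↦ x ^ r := by
    ext x
    simp [eval_eq_sum_range' hN]
  simp [hP, fwdDiff_iter_finsetSum, fwdDiff_iter_const_smul]

theorem fwdDiff_descPochhammer_eval (m : ℕ) :
    Δ_[1] (descPochhammer R m).eval = m • (descPochhammer R (m - 1)).eval := by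
  cases m with
  | zero => ext; simp [fwdDiff]
  | succ m =>
    ext x
    have hshift :
        (descPochhammer R (m + 1)).eval (x + 1) = (x + 1) * (descPochhammer R m).eval x := by
      simp [descPochhammer_succ_left]
    simp only [fwdDiff, hshift, descPochhammer_succ_eval, Pi.smul_apply, nsmul_eq_mul,
      add_tsub_cancel_right]
    push_cast
    ring

theorem fwdDiff_iter_descPochhammer_eval (i j : ℕ) :
    (Δ_[1])^[j] (descPochhammer R i).eval =
      i.descFactorial j • (descPochhammer R (i - j)).eval := by
  induction j with
  | zero => simp
  | succ j ih =>
    rw [Function.iterate_succ_apply', ih, fwdDiff_const_smul, fwdDiff_descPochhammer_eval,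
      smul_smul, Nat.descFactorial_succ, mul_comm, Nat.sub_sub]

end fwdDiff

theorem b_eq_fwdDiff_iter (i j : ℕ) (k : ℝ) : b i j k = (Δ_[1])^[j] (fun x : ℝ ↦ x ^ i) k := by
  rw [fwdDiff_iter_eq_sum_shift, b]
  refine sum_congr rfl fun r _ ↦ ?_
  simp only [nsmul_eq_mul, mul_one, zsmul_eq_mul]
  push_cast
  ring

theorem b_eq_zero_of_lt {i j : ℕ} (hij : i < j) (k : ℝ) : b i j k = 0 := by
  rw [b_eq_fwdDiff_iter, fwdDiff_iter_pow_eq_zero_of_lt hij, Pi.zero_apply]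

theorem c_eq_coeff_comp (i j : ℕ) (k : ℝ) :
    c i j k = ((descPochhammer ℝ i).comp (X - C k)).coeff j := by
  rw [comp, eval₂_eq_sum_range, descPochhammer_natDegree, finsetSum_coeff, sub_eq_add_neg,
    ← C_neg, c]
  simp only [coeff_C_mul, coeff_X_add_C_pow]
  refine sum_subset (fun r hr ↦ ?_) (fun r hri hr ↦ ?_) |>.trans (sum_congr rfl fun r _ ↦ ?_)
  · simp only [mem_Icc, mem_range] at hr ⊢; omega
  · simp only [mem_Icc, mem_range, not_and, not_le] at hri hr
    rw [Nat.choose_eq_zero_of_lt (by omega), Nat.cast_zero, zero_mul, zero_mul]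
  · rw [s]; ring

theorem sum_c_mul_b (i j : ℕ) (k₁ k₂ : ℝ) :
    ∑ r ∈ Icc j i, c i r k₁ * b r j k₂ =
      i.descFactorial j * (descPochhammer ℝ (i - j)).eval (k₂ - k₁) := by
  set Q := (descPochhammer ℝ i).comp (X - C k₁)
  have hQ : Q.natDegree < i + 1 := by
    simp [Q, natDegree_comp, descPochhammer_natDegree]
  have hQeval : Q.eval = fun x ↦ (descPochhammer ℝ i).eval (x + -k₁) := by
    ext x; simp [Q, sub_eq_add_neg]
  have hext : ∑ r ∈ Icc j i, c i r k₁ * b r j k₂ = ∑ r ∈ range (i + 1), c i r k₁ * b r j k₂ := by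
    refine sum_subset (fun r hr ↦ ?_) fun r hr hr' ↦ ?_
    · simp only [mem_Icc, mem_range] at hr ⊢; omega
    · simp only [mem_Icc, mem_range, not_and, not_le] at hr hr'
      rw [b_eq_zero_of_lt (by omega), mul_zero]
  calc ∑ r ∈ Icc j i, c i r k₁ * b r j k₂
      = (Δ_[1])^[j] Q.eval k₂ := by
        rw [hext, Q.fwdDiff_iter_eval_eq_sum hQ]
        simp only [c_eq_coeff_comp, b_eq_fwdDiff_iter, Q]
    _ = i.descFactorial j * (descPochhammer ℝ (i - j)).eval (k₂ - k₁) := by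
        rw [hQeval, fwdDiff_iter_comp_add (f := (descPochhammer ℝ i).eval),
          fwdDiff_iter_descPochhammer_eval]
        simp [sub_eq_add_neg]

/-- For integers `k₁ ≤ k₂`,
`sum_{r=j}^{i} c(i,r,k₁)*b(r,j,k₂) = i! * binom(k₂-k₁, i-j)`,
where the binomial coefficient is `0` when `i - j < 0` or `i - j > k₂ - k₁`. -/
theorem msn1_msn2_product (i j : ℕ) (k₁ k₂ : ℤ) (h : k₁ ≤ k₂) :
    ∑ r ∈ Finset.Icc j i, c i r (k₁ : ℝ) * b r j (k₂ : ℝ) =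
      (Nat.factorial i : ℝ) *
        (if j ≤ i then (((k₂ - k₁).toNat.choose (i - j) : ℕ) : ℝ) else 0) := by
  have hd : (k₂ : ℝ) - k₁ = ((k₂ - k₁).toNat : ℕ) :=
    mod_cast (Int.toNat_of_nonneg (sub_nonneg.mpr h)).symm
  rw [sum_c_mul_b, hd, descPochhammer_eval_eq_descFactorial]
  split_ifs with hji
  · rw [← Nat.factorial_mul_descFactorial hji,
      (k₂ - k₁).toNat.descFactorial_eq_factorial_mul_choose]
    push_cast
    ring
  · rw [Nat.descFactorial_eq_zero_iff_lt.mpr (by omega)]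
    simp
end

section
/- For all nonnegative integers i, j and all real numbers k₁ and k₂, Σ_{r=j}^{i} binom(r,j)·k₂^{r-j}·c(i,r,k₁) = c(i,j,k₁-k₂). -/
open Finset

/-!
Reading `s i r` as the coefficients of the falling factorial `P = descPochhammer ℝ i`, the
binomial expansion of `(X - k)^r` shows that `c i j k` is the `j`-th coefficient of the Taylor
shift `P(X - k)`. The left-hand side is the same expansion applied to `P(X - k₁)` and the shift
by `k₂`, and the two shifts compose to the shift by `k₂ - k₁`.
-/

namespace Polynomial

theorem coeff_taylor_eq_sum_Icc {R : Type*} [CommSemiring R] {p : R[X]} {n : ℕ}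
    (hp : p.natDegree ≤ n) (a : R) (j : ℕ) :
    (taylor a p).coeff j = ∑ r ∈ Icc j n, (r.choose j : R) * a ^ (r - j) * p.coeff r := by
  rcases lt_or_ge n j with hnj | hjn
  · rw [coeff_eq_zero_of_natDegree_lt ((natDegree_taylor p a).trans_lt (hp.trans_lt hnj)),
      Icc_eq_empty_of_lt hnj, sum_empty]
  have hdeg : (hasseDeriv j p).natDegree < n + 1 - j :=
    (natDegree_hasseDeriv_le p j).trans_lt (by omega)
  rw [taylor_coeff, eval_eq_sum_range' hdeg, ← Ico_add_one_right_eq_Icc,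
    sum_Ico_eq_sum_range]
  refine sum_congr rfl fun m _ => ?_
  rw [hasseDeriv_coeff, add_comm m j, Nat.add_sub_cancel_left]
  ring

end Polynomial

open Polynomial

theorem c_eq_coeff_taylor (i j : ℕ) (k : ℝ) :
    c i j k = (taylor (-k) (descPochhammer ℝ i)).coeff j := by
  rw [coeff_taylor_eq_sum_Icc (descPochhammer_natDegree ℝ i).le]
  rfl

/-- `sum_{r=j}^{i} binom(r,j)*k₂^(r-j)*c(i,r,k₁) = c(i,j,k₁-k₂)`. -/
theorem msn1_param_shift (i j : ℕ) (k₁ k₂ : ℝ) :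
    ∑ r ∈ Finset.Icc j i, (r.choose j : ℝ) * k₂ ^ (r - j) * c i r k₁ =
      c i j (k₁ - k₂) := by
  have hdeg : (taylor (-k₁) (descPochhammer ℝ i)).natDegree ≤ i := by
    rw [natDegree_taylor, descPochhammer_natDegree]
  simp_rw [c_eq_coeff_taylor]
  rw [← coeff_taylor_eq_sum_Icc hdeg, taylor_taylor, neg_sub, sub_eq_add_neg]
end
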